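/- There exists a constant C > 0 such that for all ζ, θ ∈ ℝ, all μ ∈ [1/2, 2] and all λ ∈ (0, 1], the L^{2N/(N+4)}(ℝ^N) norm of the function x ↦ f(e^{iζ}W_μ(x) + e^{iθ}W_λ(x)) − f(e^{iζ}W_μ(x)) − f(e^{iθ}W_λ(x)) is at most C·λ^{(N+4)/4}; that is, (∫_{ℝ^N} |f(e^{iζ}W_μ + e^{iθ}W_λ) − f(e^{iζ}W_μ) − f(e^{iθ}W_λ)|^{2N/(N+4)} dx)^{(N+4)/(2N)} ≤ C·λ^{(N+4)/4}. -/

import Mathlib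

open MeasureTheory

noncomputable section

abbrev Rn (N : ℕ) : Type := EuclideanSpace ℝ (Fin N)

noncomputable def lapR {N : ℕ} (u : Rn N → ℝ) (x : Rn N) : ℝ :=
  ∑ i : Fin N, iteratedFDeriv ℝ 2 u x (fun _ => EuclideanSpace.single i 1)

noncomputable def lapC {N : ℕ} (u : Rn N → ℂ) (x : Rn N) : ℂ :=
  ∑ i : Fin N, iteratedFDeriv ℝ 2 u x (fun _ => EuclideanSpace.single i 1)

noncomputable def Wfun (N : ℕ) (x : Rn N) : ℝ :=
  ((N : ℝ) * ((N : ℝ) - 4) * ((N : ℝ) ^ 2 - 4)) ^ (((N : ℝ) - 4) / 8) *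
    (1 + ‖x‖ ^ 2) ^ (-(((N : ℝ) - 4) / 2))

noncomputable def LamR {N : ℕ} (v : Rn N → ℝ) (x : Rn N) : ℝ :=
  (((N : ℝ) - 4) / 2) * v x + fderiv ℝ v x x

noncomputable def LamC {N : ℕ} (v : Rn N → ℂ) (x : Rn N) : ℂ :=
  ((((N : ℝ) - 4) / 2) : ℝ) * v x + fderiv ℝ v x x

noncomputable def rescR {N : ℕ} (lam : ℝ) (u : Rn N → ℝ) (x : Rn N) : ℝ :=
  lam ^ (-(((N : ℝ) - 4) / 2)) * u (lam⁻¹ • x)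

noncomputable def fNL (N : ℕ) (z : ℂ) : ℂ :=
  Complex.ofReal (‖z‖ ^ ((8 : ℝ) / ((N : ℝ) - 4))) * z

noncomputable def fNL' (N : ℕ) (z w : ℂ) : ℂ :=
  if z = 0 then 0 else
    Complex.ofReal (‖z‖ ^ ((8 : ℝ) / ((N : ℝ) - 4))) *
      (w + Complex.ofReal (((8 : ℝ) / ((N : ℝ) - 4)) * ((((starRingEnd ℂ) z) * w).re / ‖z‖ ^ 2)) * z)

noncomputable def FNL (N : ℕ) (z : ℂ) : ℝ :=
  (((N : ℝ) - 4) / (2 * (N : ℝ))) * ‖z‖ ^ ((2 * (N : ℝ)) / ((N : ℝ) - 4))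

noncomputable def cexp (θ : ℝ) : ℂ := Complex.exp (Complex.I * θ)

noncomputable def pairC {N : ℕ} (v w : Rn N → ℂ) : ℝ :=
  ∫ x : Rn N, ((starRingEnd ℂ) (v x) * w x).re

noncomputable def energyC {N : ℕ} (u : Rn N → ℂ) : ℝ :=
  (1 / 2) * (∫ x : Rn N, ‖lapC u x‖ ^ 2) - (∫ x : Rn N, FNL N (u x))

noncomputable def enorm2 {N : ℕ} (g : Rn N → ℂ) : ℝ := ∫ x : Rn N, ‖lapC g x‖ ^ 2

/-!
Write κ = 8/(N-4) ≤ 1 and q = 2N/(N+4). For f(z) = |z|^κ z one has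
|f(z+w) - f(z) - f(w)| ≤ 5 min(|z|^κ |w|, |w|^κ |z|). Since W_μ is bounded uniformly for μ ≥ 1/2
and W_λ(√λ y) ≤ C_N |y|^{-(N-4)}, the integrand at x = √λ y is bounded by a λ-independent multiple
of min(|y|^{-8q}, |y|^{-(N-4)q}). This majorant is integrable on ℝ^N precisely because N > 12
(8q < N < (N-4)q), and the substitution x = √λ y contributes the factor λ^{N/2}, which becomes
λ^{(N+4)/4} after taking the power 1/q.
-/

open Real Set

namespace Real

lemma rpow_mul_le_rpow_mul_of_le {κ s t : ℝ} (hκ : κ ≤ 1) (ht : 0 ≤ t) (hts : t ≤ s) :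
    s ^ κ * t ≤ t ^ κ * s := by
  rcases ht.eq_or_lt with rfl | ht
  · simpa using mul_nonneg (rpow_nonneg le_rfl κ) (ht.trans hts)
  have hs : 0 < s := ht.trans_le hts
  have hmono : s ^ (κ - 1) ≤ t ^ (κ - 1) := rpow_le_rpow_of_nonpos ht hts (by linarith)
  calc s ^ κ * t = s ^ (κ - 1) * s * t := by rw [← rpow_add_one hs.ne', sub_add_cancel]
    _ ≤ t ^ (κ - 1) * s * t := by gcongr
    _ = t ^ κ * s := by rw [mul_right_comm, ← rpow_add_one ht.ne', sub_add_cancel]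

lemma rpow_sub_rpow_mul_le {κ s t : ℝ} (hκ0 : 0 ≤ κ) (hκ1 : κ ≤ 1) (ht : 0 ≤ t) (hts : t ≤ s) :
    (s ^ κ - t ^ κ) * t ≤ s ^ κ * (s - t) := by
  have hmono : t ^ κ ≤ s ^ κ := rpow_le_rpow ht hts hκ0
  nlinarith [rpow_mul_le_rpow_mul_of_le hκ1 ht hts]

lemma rpow_le_mul_min_rpow {D c r a b q : ℝ} (hD : 0 ≤ D) (hc : 0 ≤ c) (hr : 0 ≤ r)
    (hq : 0 ≤ q) (h : D ≤ c * min (r ^ (-a)) (r ^ (-b))) :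
    D ^ q ≤ c ^ q * min (r ^ (-(a * q))) (r ^ (-(b * q))) := by
  have hpow : ∀ s : ℝ, (r ^ (-s)) ^ q = r ^ (-(s * q)) := fun s => by
    rw [← rpow_mul hr, neg_mul]
  have hmin : 0 ≤ min (r ^ (-a)) (r ^ (-b)) := le_min (rpow_nonneg hr _) (rpow_nonneg hr _)
  calc D ^ q ≤ (c * min (r ^ (-a)) (r ^ (-b))) ^ q := rpow_le_rpow hD h hq
    _ = c ^ q * min (r ^ (-a)) (r ^ (-b)) ^ q := mul_rpow hc hmin
    _ ≤ c ^ q * min (r ^ (-(a * q))) (r ^ (-(b * q))) := by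
        gcongr
        rw [← hpow, ← hpow]
        exact le_min (rpow_le_rpow hmin (min_le_left _ _) hq)
          (rpow_le_rpow hmin (min_le_right _ _) hq)

end Real

section PowerNonlinearity

variable {E : Type*} [NormedAddCommGroup E] [NormedSpace ℝ E] {κ : ℝ}

lemma norm_rpow_smul_sub_rpow_smul_le (hκ0 : 0 ≤ κ) (hκ1 : κ ≤ 1) (u v : E) :
    ‖‖u‖ ^ κ • u - ‖v‖ ^ κ • v‖ ≤ 2 * max ‖u‖ ‖v‖ ^ κ * ‖u - v‖ := by
  wlog hvu : ‖v‖ ≤ ‖u‖ generalizing u v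
  · rw [norm_sub_rev, norm_sub_rev u, max_comm]
    exact this v u (le_of_not_ge hvu)
  rw [max_eq_left hvu]
  have hsplit : ‖u‖ ^ κ • u - ‖v‖ ^ κ • v = ‖u‖ ^ κ • (u - v) + (‖u‖ ^ κ - ‖v‖ ^ κ) • v := by
    rw [smul_sub, sub_smul]; abel
  have hdiff : 0 ≤ ‖u‖ ^ κ - ‖v‖ ^ κ := sub_nonneg.2 (rpow_le_rpow (norm_nonneg v) hvu hκ0)
  have hsecond : (‖u‖ ^ κ - ‖v‖ ^ κ) * ‖v‖ ≤ ‖u‖ ^ κ * ‖u - v‖ :=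
    (rpow_sub_rpow_mul_le hκ0 hκ1 (norm_nonneg v) hvu).trans
      (mul_le_mul_of_nonneg_left (norm_sub_norm_le u v) (rpow_nonneg (norm_nonneg u) κ))
  calc ‖‖u‖ ^ κ • u - ‖v‖ ^ κ • v‖
      ≤ ‖u‖ ^ κ * ‖u - v‖ + (‖u‖ ^ κ - ‖v‖ ^ κ) * ‖v‖ := by
        rw [hsplit]
        refine (norm_add_le _ _).trans_eq ?_
        rw [norm_smul, norm_smul, Real.norm_of_nonneg (rpow_nonneg (norm_nonneg u) κ),
          Real.norm_of_nonneg hdiff]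
    _ ≤ 2 * ‖u‖ ^ κ * ‖u - v‖ := by linarith

lemma norm_rpow_smul_add_sub_le (hκ0 : 0 ≤ κ) (hκ1 : κ ≤ 1) {a b : E} (hba : ‖b‖ ≤ ‖a‖) :
    ‖‖a + b‖ ^ κ • (a + b) - ‖a‖ ^ κ • a‖ ≤ 4 * ‖a‖ ^ κ * ‖b‖ := by
  have hmax : max ‖a + b‖ ‖a‖ ≤ 2 * ‖a‖ :=
    max_le ((norm_add_le a b).trans (by linarith)) (by linarith [norm_nonneg a])
  have htwo : (2 * ‖a‖) ^ κ ≤ 2 * ‖a‖ ^ κ := by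
    rw [mul_rpow zero_le_two (norm_nonneg a)]
    gcongr
    exact rpow_le_self_of_one_le one_le_two hκ1
  calc ‖‖a + b‖ ^ κ • (a + b) - ‖a‖ ^ κ • a‖ ≤ 2 * max ‖a + b‖ ‖a‖ ^ κ * ‖a + b - a‖ :=
        norm_rpow_smul_sub_rpow_smul_le hκ0 hκ1 _ _
    _ ≤ 2 * (2 * ‖a‖ ^ κ) * ‖b‖ := by
        rw [add_sub_cancel_left]
        gcongr
        exact (rpow_le_rpow (by positivity) hmax hκ0).trans htwo
    _ = 4 * ‖a‖ ^ κ * ‖b‖ := by ring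

lemma norm_rpow_smul_add_sub_sub_le (hκ0 : 0 ≤ κ) (hκ1 : κ ≤ 1) (z w : E) :
    ‖‖z + w‖ ^ κ • (z + w) - ‖z‖ ^ κ • z - ‖w‖ ^ κ • w‖ ≤ 5 * ‖z‖ ^ κ * ‖w‖ := by
  rcases le_total ‖w‖ ‖z‖ with hwz | hzw
  · have hw : ‖‖w‖ ^ κ • w‖ ≤ ‖z‖ ^ κ * ‖w‖ := by
      rw [norm_smul, Real.norm_of_nonneg (rpow_nonneg (norm_nonneg w) κ)]
      gcongr
    calc _ ≤ ‖‖z + w‖ ^ κ • (z + w) - ‖z‖ ^ κ • z‖ + ‖‖w‖ ^ κ • w‖ := norm_sub_le _ _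
      _ ≤ 4 * ‖z‖ ^ κ * ‖w‖ + ‖z‖ ^ κ * ‖w‖ := add_le_add (norm_rpow_smul_add_sub_le hκ0 hκ1 hwz) hw
      _ = 5 * ‖z‖ ^ κ * ‖w‖ := by ring
  · have hz : ‖‖z‖ ^ κ • z‖ ≤ ‖z‖ ^ κ * ‖w‖ := by
      rw [norm_smul, Real.norm_of_nonneg (rpow_nonneg (norm_nonneg z) κ)]
      gcongr
    have hswap : ‖w‖ ^ κ * ‖z‖ ≤ ‖z‖ ^ κ * ‖w‖ := rpow_mul_le_rpow_mul_of_le hκ1 (norm_nonneg z) hzw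
    have hrearr : ‖z + w‖ ^ κ • (z + w) - ‖z‖ ^ κ • z - ‖w‖ ^ κ • w =
        (‖w + z‖ ^ κ • (w + z) - ‖w‖ ^ κ • w) - ‖z‖ ^ κ • z := by
      rw [add_comm z w]; abel
    calc _ ≤ ‖‖w + z‖ ^ κ • (w + z) - ‖w‖ ^ κ • w‖ + ‖‖z‖ ^ κ • z‖ := by
          rw [hrearr]; exact norm_sub_le _ _
      _ ≤ 4 * (‖w‖ ^ κ * ‖z‖) + ‖z‖ ^ κ * ‖w‖ := by
          rw [← mul_assoc]; exact add_le_add (norm_rpow_smul_add_sub_le hκ0 hκ1 hzw) hz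
      _ ≤ 5 * ‖z‖ ^ κ * ‖w‖ := by linarith

end PowerNonlinearity

section Integrability

variable {E : Type*} [NormedAddCommGroup E] [NormedSpace ℝ E] [MeasurableSpace E] [BorelSpace E]
  [FiniteDimensional ℝ E] [Nontrivial E]

lemma integrable_min_norm_rpow_neg (μ : Measure E) [μ.IsAddHaarMeasure] {a b : ℝ}
    (ha : a < Module.finrank ℝ E) (hb : (Module.finrank ℝ E : ℝ) < b) :
    Integrable (fun x : E => min (‖x‖ ^ (-a)) (‖x‖ ^ (-b))) μ := by
  set d := Module.finrank ℝ E
  have hd : ((d - 1 : ℕ) : ℝ) = d - 1 := by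
    rw [Nat.cast_sub Module.finrank_pos, Nat.cast_one]
  have hpow : ∀ {r : ℝ}, 0 < r → ∀ c : ℝ, r ^ (d - 1) • r ^ (-c) = r ^ ((d : ℝ) - 1 - c) := by
    intro r hr c
    rw [smul_eq_mul, ← rpow_natCast, hd, ← rpow_add hr, ← sub_eq_add_neg]
  refine (integrable_fun_norm_addHaar μ (f := fun r => min (r ^ (-a)) (r ^ (-b)))).2 ?_
  rw [← Ioc_union_Ioi_eq_Ioi zero_le_one]
  refine IntegrableOn.union ?_ ?_
  · have hint : IntegrableOn (fun r : ℝ => r ^ ((d : ℝ) - 1 - a)) (Ioc 0 1) :=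
      (intervalIntegral.intervalIntegrable_rpow' (by linarith)).1
    refine hint.congr_fun (fun r hr => ?_) measurableSet_Ioc
    rw [min_eq_left (rpow_le_rpow_of_exponent_ge hr.1 hr.2 (by linarith)), hpow hr.1]
  · have hint : IntegrableOn (fun r : ℝ => r ^ ((d : ℝ) - 1 - b)) (Ioi 1) :=
      integrableOn_Ioi_rpow_of_lt (by linarith) one_pos
    refine hint.congr_fun (fun r hr => ?_) measurableSet_Ioi
    have hr1 : 1 < r := hr
    rw [min_eq_right (rpow_le_rpow_of_exponent_le hr1.le (by linarith)), hpow (one_pos.trans hr1)]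

end Integrability

section Profiles

variable {N : ℕ}

lemma Wfun_eq_Wfun_zero_mul (x : Rn N) :
    Wfun N x = Wfun N 0 * (1 + ‖x‖ ^ 2) ^ (-(((N : ℝ) - 4) / 2)) := by
  simp [Wfun]

lemma Wfun_zero_nonneg (hN : 4 ≤ N) : 0 ≤ Wfun N 0 := by
  have hN' : (4 : ℝ) ≤ N := by exact_mod_cast hN
  simp only [Wfun, norm_zero]
  have : (0 : ℝ) ≤ N * (N - 4) * (N ^ 2 - 4) := by
    apply mul_nonneg (mul_nonneg _ _) <;> nlinarith
  positivity

lemma Wfun_nonneg (hN : 4 ≤ N) (x : Rn N) : 0 ≤ Wfun N x := by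
  rw [Wfun_eq_Wfun_zero_mul]
  exact mul_nonneg (Wfun_zero_nonneg hN) (by positivity)

lemma Wfun_le_Wfun_zero (hN : 4 ≤ N) (x : Rn N) : Wfun N x ≤ Wfun N 0 := by
  have hN' : (4 : ℝ) ≤ N := by exact_mod_cast hN
  rw [Wfun_eq_Wfun_zero_mul]
  refine mul_le_of_le_one_right (Wfun_zero_nonneg hN) ?_
  exact rpow_le_one_of_one_le_of_nonpos (by nlinarith [sq_nonneg ‖x‖]) (by linarith)

lemma rescR_Wfun_nonneg (hN : 4 ≤ N) {μ : ℝ} (hμ : 0 ≤ μ) (x : Rn N) :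
    0 ≤ rescR μ (Wfun N) x :=
  mul_nonneg (rpow_nonneg hμ _) (Wfun_nonneg hN _)

lemma rescR_Wfun_le_of_half_le (hN : 4 ≤ N) {μ : ℝ} (hμ : 1 / 2 ≤ μ) (x : Rn N) :
    rescR μ (Wfun N) x ≤ 2 ^ (((N : ℝ) - 4) / 2) * Wfun N 0 := by
  have hN' : (4 : ℝ) ≤ N := by exact_mod_cast hN
  have hscale : μ ^ (-(((N : ℝ) - 4) / 2)) ≤ 2 ^ (((N : ℝ) - 4) / 2) :=
    calc μ ^ (-(((N : ℝ) - 4) / 2)) ≤ (1 / 2) ^ (-(((N : ℝ) - 4) / 2)) :=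
          rpow_le_rpow_of_nonpos (by norm_num) hμ (by linarith)
      _ = 2 ^ (((N : ℝ) - 4) / 2) := by
          rw [one_div, inv_rpow zero_le_two, rpow_neg zero_le_two, inv_inv]
  exact mul_le_mul hscale (Wfun_le_Wfun_zero hN _) (Wfun_nonneg hN _) (by positivity)

lemma rescR_Wfun_sqrt_smul_le (hN : 4 ≤ N) {lam : ℝ} (hlam : 0 < lam) {y : Rn N} (hy : y ≠ 0) :
    rescR lam (Wfun N) (√lam • y) ≤ Wfun N 0 * ‖y‖ ^ (-((N : ℝ) - 4)) := by
  have hN' : (4 : ℝ) ≤ N := by exact_mod_cast hN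
  set e : ℝ := ((N : ℝ) - 4) / 2
  have hy0 : 0 < ‖y‖ := norm_pos_iff.2 hy
  have hnorm : ‖lam⁻¹ • √lam • y‖ ^ 2 = ‖y‖ ^ 2 / lam := by
    rw [norm_smul, norm_smul, Real.norm_of_nonneg (inv_nonneg.2 hlam.le),
      Real.norm_of_nonneg (sqrt_nonneg lam), mul_pow, mul_pow, sq_sqrt hlam.le]
    field_simp
  have hcollect : lam ^ (-e) * (1 + ‖y‖ ^ 2 / lam) ^ (-e) = (lam + ‖y‖ ^ 2) ^ (-e) := by
    rw [← mul_rpow hlam.le (by positivity), mul_add, mul_one, mul_div_cancel₀ _ hlam.ne']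
  have hdecay : (lam + ‖y‖ ^ 2) ^ (-e) ≤ ‖y‖ ^ (-((N : ℝ) - 4)) :=
    calc (lam + ‖y‖ ^ 2) ^ (-e) ≤ (‖y‖ ^ 2) ^ (-e) :=
          rpow_le_rpow_of_nonpos (by positivity) (by linarith) (by simp only [e]; linarith)
      _ = ‖y‖ ^ (-((N : ℝ) - 4)) := by
          rw [← rpow_natCast, ← rpow_mul hy0.le]
          simp only [e]
          ring_nf
  calc rescR lam (Wfun N) (√lam • y)
      = Wfun N 0 * (lam ^ (-e) * (1 + ‖y‖ ^ 2 / lam) ^ (-e)) := by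
        rw [rescR, Wfun_eq_Wfun_zero_mul, hnorm]; ring
    _ ≤ Wfun N 0 * ‖y‖ ^ (-((N : ℝ) - 4)) := by
        rw [hcollect]; exact mul_le_mul_of_nonneg_left hdecay (Wfun_zero_nonneg hN)

end Profiles

section Interaction

variable {N : ℕ}

lemma norm_cexp_mul_ofReal (t a : ℝ) : ‖cexp t * (a : ℂ)‖ = |a| := by
  rw [norm_mul, cexp, Complex.norm_exp_I_mul_ofReal, one_mul, Complex.norm_real,
    Real.norm_eq_abs]

def fNLDefect (N : ℕ) (z w : ℂ) : ℂ := fNL N (z + w) - fNL N z - fNL N w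

lemma fNL_eq_smul (N : ℕ) (z : ℂ) : fNL N z = ‖z‖ ^ ((8 : ℝ) / ((N : ℝ) - 4)) • z :=
  Complex.real_smul.symm

lemma fNLDefect_comm (z w : ℂ) : fNLDefect N z w = fNLDefect N w z := by
  simp only [fNLDefect, add_comm z w]; ring

lemma norm_fNLDefect_le (hN : 12 ≤ N) (z w : ℂ) :
    ‖fNLDefect N z w‖ ≤ 5 * ‖z‖ ^ ((8 : ℝ) / ((N : ℝ) - 4)) * ‖w‖ := by
  have hN' : (12 : ℝ) ≤ N := by exact_mod_cast hN
  simp only [fNLDefect, fNL_eq_smul]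
  exact norm_rpow_smul_add_sub_sub_le (div_nonneg (by norm_num) (by linarith))
    ((div_le_one (by linarith)).2 (by linarith)) z w

lemma norm_fNLDefect_le_min (hN : 12 ≤ N) {z w : ℂ} {A B r : ℝ} (hr : 0 < r) (hB : 0 ≤ B)
    (hz : ‖z‖ ≤ A) (hw : ‖w‖ ≤ B * r ^ (-((N : ℝ) - 4))) :
    ‖fNLDefect N z w‖ ≤
      5 * max (A * B ^ ((8 : ℝ) / ((N : ℝ) - 4))) (A ^ ((8 : ℝ) / ((N : ℝ) - 4)) * B) *
        min (r ^ (-8 : ℝ)) (r ^ (-((N : ℝ) - 4))) := by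
  have hN' : (12 : ℝ) ≤ N := by exact_mod_cast hN
  set κ : ℝ := (8 : ℝ) / ((N : ℝ) - 4) with hκ
  have hκ0 : 0 ≤ κ := div_nonneg (by norm_num) (by linarith)
  have hA : 0 ≤ A := (norm_nonneg z).trans hz
  have hwκ : ‖w‖ ^ κ ≤ B ^ κ * r ^ (-8 : ℝ) := by
    refine (rpow_le_rpow (norm_nonneg w) hw hκ0).trans_eq ?_
    have hN4 : (N : ℝ) - 4 ≠ 0 := by linarith
    rw [mul_rpow hB (rpow_nonneg hr.le _), ← rpow_mul hr.le, hκ]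
    congr 2
    field_simp
  have hdecay : ‖fNLDefect N z w‖ ≤ 5 * (A * B ^ κ) * r ^ (-8 : ℝ) :=
    calc ‖fNLDefect N z w‖ ≤ 5 * ‖w‖ ^ κ * ‖z‖ := by
          rw [fNLDefect_comm]; exact norm_fNLDefect_le hN w z
      _ ≤ 5 * (B ^ κ * r ^ (-8 : ℝ)) * A := by gcongr
      _ = 5 * (A * B ^ κ) * r ^ (-8 : ℝ) := by ring
  have hbounded : ‖fNLDefect N z w‖ ≤ 5 * (A ^ κ * B) * r ^ (-((N : ℝ) - 4)) :=
    calc ‖fNLDefect N z w‖ ≤ 5 * ‖z‖ ^ κ * ‖w‖ := norm_fNLDefect_le hN z w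
      _ ≤ 5 * A ^ κ * (B * r ^ (-((N : ℝ) - 4))) := by gcongr
      _ = 5 * (A ^ κ * B) * r ^ (-((N : ℝ) - 4)) := by ring
  rw [mul_min_of_nonneg _ _ (by positivity)]
  exact le_min (hdecay.trans (by gcongr; exact le_max_left _ _))
    (hbounded.trans (by gcongr; exact le_max_right _ _))

lemma exists_integral_norm_fNLDefect_rpow_le (hN : 13 ≤ N) :
    ∃ K : ℝ, 0 ≤ K ∧ ∀ ζ θ μ lam : ℝ, 1 / 2 ≤ μ → 0 < lam →
      ∫ x : Rn N, ‖fNLDefect N (cexp ζ * (rescR μ (Wfun N) x : ℂ))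
          (cexp θ * (rescR lam (Wfun N) x : ℂ))‖ ^ ((2 * (N : ℝ)) / ((N : ℝ) + 4))
        ≤ K * lam ^ ((N : ℝ) / 2) := by
  have hN' : (13 : ℝ) ≤ N := by exact_mod_cast hN
  have : NeZero N := ⟨by omega⟩
  set q : ℝ := (2 * (N : ℝ)) / ((N : ℝ) + 4) with hq
  have hq0 : 0 ≤ q := by positivity
  set A : ℝ := 2 ^ (((N : ℝ) - 4) / 2) * Wfun N 0
  set B : ℝ := Wfun N 0
  have hB : 0 ≤ B := Wfun_zero_nonneg (by omega)
  set c : ℝ := 5 * max (A * B ^ ((8 : ℝ) / ((N : ℝ) - 4))) (A ^ ((8 : ℝ) / ((N : ℝ) - 4)) * B)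
  have hc : 0 ≤ c := by positivity
  set H : Rn N → ℝ := fun y => c ^ q * min (‖y‖ ^ (-(8 * q))) (‖y‖ ^ (-(((N : ℝ) - 4) * q)))
  have hH : Integrable H := by
    refine (integrable_min_norm_rpow_neg volume ?_ ?_).const_mul _ <;>
      rw [finrank_euclideanSpace_fin, hq]
    · rw [← mul_div_assoc, div_lt_iff₀ (by positivity)]; nlinarith
    · rw [← mul_div_assoc, lt_div_iff₀ (by positivity)]; nlinarith
  refine ⟨∫ y, H y, integral_nonneg fun y => by positivity, fun ζ θ μ lam hμ hlam => ?_⟩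
  have hpointwise : ∀ x : Rn N, x ≠ 0 →
      ‖fNLDefect N (cexp ζ * (rescR μ (Wfun N) x : ℂ)) (cexp θ * (rescR lam (Wfun N) x : ℂ))‖
        ^ q ≤ H ((√lam)⁻¹ • x) := by
    intro x hx
    set y := (√lam)⁻¹ • x
    have hxy : x = √lam • y := (smul_inv_smul₀ (sqrt_pos.2 hlam).ne' x).symm
    have hy : y ≠ 0 := smul_ne_zero (inv_ne_zero (sqrt_pos.2 hlam).ne') hx
    rw [hxy]
    refine rpow_le_mul_min_rpow (norm_nonneg _) hc (norm_nonneg y) hq0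
      (norm_fNLDefect_le_min (by omega) (norm_pos_iff.2 hy) hB ?_ ?_)
    · rw [norm_cexp_mul_ofReal, abs_of_nonneg (rescR_Wfun_nonneg (by omega) (by linarith) _)]
      exact rescR_Wfun_le_of_half_le (by omega) hμ _
    · rw [norm_cexp_mul_ofReal, abs_of_nonneg (rescR_Wfun_nonneg (by omega) hlam.le _)]
      exact rescR_Wfun_sqrt_smul_le (by omega) hlam hy
  calc _ ≤ ∫ x : Rn N, H ((√lam)⁻¹ • x) :=
        integral_mono_of_nonneg (.of_forall fun x => by positivity)
          (hH.comp_smul (inv_ne_zero (sqrt_pos.2 hlam).ne'))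
          (by
            filter_upwards [compl_mem_ae_iff.2 (measure_singleton (0 : Rn N))] with x hx
            exact hpointwise x hx)
    _ = √lam ^ N * ∫ y, H y := by
        rw [Measure.integral_comp_inv_smul_of_nonneg volume H (sqrt_nonneg lam),
          finrank_euclideanSpace_fin, smul_eq_mul]
    _ = (∫ y, H y) * lam ^ ((N : ℝ) / 2) := by
        rw [sqrt_eq_rpow, ← rpow_natCast, ← rpow_mul hlam.le, mul_comm]
        ring_nf

end Interaction

theorem stmt_9 (N : ℕ) (hN : 13 ≤ N) :
    ∃ C : ℝ, 0 < C ∧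
      ∀ ζ θ μ lam : ℝ, 1 / 2 ≤ μ → μ ≤ 2 → 0 < lam → lam ≤ 1 →
        (∫ x : Rn N,
            ‖fNL N (cexp ζ * (rescR μ (Wfun N) x : ℂ) + cexp θ * (rescR lam (Wfun N) x : ℂ))
                - fNL N (cexp ζ * (rescR μ (Wfun N) x : ℂ))
                - fNL N (cexp θ * (rescR lam (Wfun N) x : ℂ))‖
              ^ ((2 * (N : ℝ)) / ((N : ℝ) + 4))) ^ (((N : ℝ) + 4) / (2 * (N : ℝ)))
          ≤ C * lam ^ (((N : ℝ) + 4) / 4) := by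
  obtain ⟨K, hK, hintegral⟩ := exists_integral_norm_fNLDefect_rpow_le hN
  set p : ℝ := ((N : ℝ) + 4) / (2 * (N : ℝ))
  refine ⟨K ^ p + 1, by positivity, fun ζ θ μ lam hμ _ hlam _ => ?_⟩
  have hN0 : (0 : ℝ) < N := by exact_mod_cast (show 0 < N by omega)
  calc _ ≤ (K * lam ^ ((N : ℝ) / 2)) ^ p :=
        rpow_le_rpow (integral_nonneg fun _ => by positivity) (hintegral ζ θ μ lam hμ hlam)
          (by positivity)
    _ = K ^ p * lam ^ (((N : ℝ) + 4) / 4) := by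
        rw [mul_rpow hK (by positivity), ← rpow_mul hlam.le]
        congr 2
        simp only [p]
        field_simp
        ring
    _ ≤ (K ^ p + 1) * lam ^ (((N : ℝ) + 4) / 4) := by gcongr; linarith
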